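/- Fix integers P ≥ 1 and N > 2P+1. The following are equivalent: (a) for every divisor d of N with d > 1, there exists an integer n with P+1 ≤ n ≤ N−P−1 such that N divides d·n and gcd(d, d·n/N) = 1 (equivalently, exp(2πi·n/N) is a root of the d-th cyclotomic polynomial Φ_d); (b) H(N) ≥ P+1. -/

import Mathlib

/-!
Write `N = d * m` for a divisor `d > 1`. The admissible `n` are the multiples `n = m * k` with
`k` coprime to `d`, and the window `P + 1 ≤ n ≤ N - P - 1` is symmetric under `k ↦ d - k`, which
preserves coprimality. So `d` admits such an `n` iff `P + 1 ≤ m * g(d)`, where `g(d)` is the largest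
`k ≤ d / 2` coprime to `d`. Computing `g(d)` case by case gives `h(d) = d / g(d)`, so the condition
reads `h(d) ≤ N / (P + 1)`, and over all divisors this is `P + 1 ≤ H(N)`.
-/

/-- The function h from the paper: h(d) = 2 + 2/(d−1) for odd d; h(2) = 2;
h(d) = 2 + 8/(d−4) for even d ≠ 2 with 4 ∤ d; h(d) = 2 + 4/(d−2) when 4 ∣ d. -/
noncomputable def hfun (d : ℕ) : ℝ :=
  if d = 2 then 2
  else if ¬ 2 ∣ d then 2 + 2 / ((d : ℝ) - 1)
  else if 4 ∣ d then 2 + 4 / ((d : ℝ) - 2)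
  else 2 + 8 / ((d : ℝ) - 4)

/-- H(N) = N / max{h(d) : d ∣ N, d > 1}. -/
noncomputable def Hfun (N : ℕ) : ℝ :=
  (N : ℝ) / sSup (hfun '' {d : ℕ | d ∣ N ∧ 1 < d})

def greatestCoprimeLeHalf (d : ℕ) : ℕ :=
  Nat.findGreatest d.Coprime (d / 2)

namespace greatestCoprimeLeHalf

variable {c d k : ℕ}

lemma two_mul_le (d : ℕ) : 2 * greatestCoprimeLeHalf d ≤ d := by
  have := Nat.findGreatest_le (P := d.Coprime) (d / 2)
  unfold greatestCoprimeLeHalf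
  omega

lemma coprime (hd : 1 < d) : d.Coprime (greatestCoprimeLeHalf d) :=
  Nat.findGreatest_spec (m := 1) (by omega) (Nat.coprime_one_right d)

lemma pos (hd : 1 < d) : 0 < greatestCoprimeLeHalf d := by
  have h := coprime hd
  refine Nat.pos_of_ne_zero fun h0 => ?_
  rw [h0, Nat.coprime_zero_right] at h
  omega

lemma le_of_coprime (hk : 2 * k ≤ d) (h : d.Coprime k) : k ≤ greatestCoprimeLeHalf d :=
  Nat.le_findGreatest (by omega) h

lemma eq_two : greatestCoprimeLeHalf 2 = 1 := by decide

lemma eq_two_mul_add_one (c : ℕ) : greatestCoprimeLeHalf (2 * c + 1) = c := by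
  rw [greatestCoprimeLeHalf, Nat.findGreatest_eq_iff]
  refine ⟨by omega, fun _ => ?_, fun n hn hn' => by omega⟩
  rw [show 2 * c + 1 = 1 + c * 2 by ring, Nat.coprime_add_mul_left_left]
  exact Nat.coprime_one_left c

lemma eq_two_mul_add_two (hc : Odd c) : greatestCoprimeLeHalf (2 * c + 2) = c := by
  rw [greatestCoprimeLeHalf, Nat.findGreatest_eq_iff]
  refine ⟨by omega, fun _ => ?_, fun n hn hn' => ?_⟩
  · rw [show 2 * c + 2 = 2 + c * 2 by ring, Nat.coprime_add_mul_left_left]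
    exact Nat.coprime_two_left.mpr hc
  · obtain rfl : n = c + 1 := by omega
    obtain ⟨j, rfl⟩ := hc
    exact Nat.not_coprime_of_dvd_of_dvd (by omega) ⟨2, by ring⟩ dvd_rfl

lemma eq_two_mul_add_four (hc : Odd c) : greatestCoprimeLeHalf (2 * c + 4) = c := by
  rw [greatestCoprimeLeHalf, Nat.findGreatest_eq_iff]
  refine ⟨by omega, fun _ => ?_, fun n hn hn' => ?_⟩
  · rw [show 2 * c + 4 = 2 ^ 2 + c * 2 by ring, Nat.coprime_add_mul_left_left,
      Nat.coprime_pow_left_iff two_pos]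
    exact Nat.coprime_two_left.mpr hc
  · obtain ⟨j, rfl⟩ := hc
    obtain rfl | rfl : n = 2 * j + 2 ∨ n = 2 * j + 3 := by omega
    · exact Nat.not_coprime_of_dvd_of_dvd one_lt_two ⟨2 * j + 3, by ring⟩ ⟨j + 1, by ring⟩
    · exact Nat.not_coprime_of_dvd_of_dvd (by omega) ⟨2, by ring⟩ dvd_rfl

lemma exists_coprime_window_iff (hd : 1 < d) (a m : ℕ) :
    (∃ k, d.Coprime k ∧ a ≤ m * k ∧ m * k + a ≤ m * d) ↔ a ≤ m * greatestCoprimeLeHalf d := by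
  constructor
  · rintro ⟨k, hk, hlow, hhigh⟩
    rcases Nat.eq_zero_or_pos a with rfl | ha
    · exact Nat.zero_le _
    have hkd : k ≤ d := (Nat.lt_of_mul_lt_mul_left (by omega : m * k < m * d)).le
    rcases le_total (2 * k) d with hk2 | hk2
    · exact hlow.trans (Nat.mul_le_mul_left m (le_of_coprime hk2 hk))
    · have hsub : m * (d - k) = m * d - m * k := Nat.mul_sub m d k
      exact (by omega : a ≤ m * (d - k)).trans <| Nat.mul_le_mul_left m <|
        le_of_coprime (by omega) ((Nat.coprime_self_sub_right hkd).mpr hk)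
  · intro h
    refine ⟨_, coprime hd, h, ?_⟩
    have := Nat.mul_le_mul_left m (two_mul_le d)
    rw [mul_left_comm, two_mul] at this
    omega

end greatestCoprimeLeHalf

open greatestCoprimeLeHalf

lemma hfun_eq_div {d : ℕ} (hd : 1 < d) : hfun d = d / greatestCoprimeLeHalf d := by
  unfold hfun
  split_ifs with h2 hodd h4
  · subst h2
    norm_num [eq_two]
  · obtain ⟨c, rfl, hc⟩ : ∃ c, d = 2 * c + 2 ∧ Odd c := ⟨d / 2 - 1, by omega, d / 4 - 1, by omega⟩
    have hc0 : (c : ℝ) ≠ 0 := by exact_mod_cast hc.pos.ne'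
    rw [eq_two_mul_add_two hc]
    push_cast
    rw [show 2 * (c : ℝ) + 2 - 2 = 2 * c by ring]
    field_simp
    ring
  · obtain ⟨c, rfl, hc⟩ : ∃ c, d = 2 * c + 4 ∧ Odd c := ⟨d / 2 - 2, by omega, d / 4 - 1, by omega⟩
    have hc0 : (c : ℝ) ≠ 0 := by exact_mod_cast hc.pos.ne'
    rw [eq_two_mul_add_four hc]
    push_cast
    field_simp
    ring
  · obtain ⟨c, rfl⟩ : ∃ c, d = 2 * c + 1 := ⟨d / 2, by omega⟩
    have hc : (c : ℝ) ≠ 0 := by exact_mod_cast (by omega : c ≠ 0)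
    rw [eq_two_mul_add_one]
    push_cast
    field_simp
    ring

lemma two_le_hfun {d : ℕ} (hd : 1 < d) : 2 ≤ hfun d := by
  have hg : (0 : ℝ) < greatestCoprimeLeHalf d := by exact_mod_cast pos hd
  rw [hfun_eq_div hd, le_div_iff₀ hg]
  exact_mod_cast two_mul_le d

lemma hfun_le_div_iff {d : ℕ} (hd : 1 < d) (m c : ℕ) (hc : 0 < c) :
    hfun d ≤ ((d * m : ℕ) : ℝ) / c ↔ c ≤ m * greatestCoprimeLeHalf d := by
  have hg : (0 : ℝ) < greatestCoprimeLeHalf d := by exact_mod_cast pos hd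
  rw [hfun_eq_div hd, div_le_div_iff₀ hg (by exact_mod_cast hc)]
  norm_cast
  rw [mul_assoc, Nat.mul_le_mul_left_iff (by omega)]

lemma le_Hfun_iff {N : ℕ} (hN : 1 < N) {c : ℝ} (hc : 0 < c) :
    c ≤ Hfun N ↔ ∀ d, d ∣ N → 1 < d → hfun d ≤ N / c := by
  set S := hfun '' {d : ℕ | d ∣ N ∧ 1 < d}
  have hfin : {d : ℕ | d ∣ N ∧ 1 < d}.Finite :=
    (Set.finite_Iic N).subset fun d hd => Nat.le_of_dvd (by omega) hd.1
  have hmem : hfun N ∈ S := ⟨N, ⟨dvd_rfl, hN⟩, rfl⟩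
  have hpos : 0 < sSup S :=
    two_pos.trans_le ((two_le_hfun hN).trans (le_csSup (hfin.image hfun).bddAbove hmem))
  rw [Hfun, le_div_iff₀ hpos, ← le_div_iff₀' hc,
    csSup_le_iff (hfin.image hfun).bddAbove ⟨_, hmem⟩, Set.forall_mem_image]
  simp only [Set.mem_ofPred_eq, and_imp]

lemma exists_admissible_iff {d : ℕ} (hd : 1 < d) (P m : ℕ) :
    (∃ n : ℕ, P + 1 ≤ n ∧ n ≤ d * m - P - 1 ∧ d * m ∣ d * n ∧ Nat.gcd d (d * n / (d * m)) = 1) ↔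
      P + 1 ≤ m * greatestCoprimeLeHalf d := by
  rw [← exists_coprime_window_iff hd]
  have hdm : d * m = m * d := mul_comm d m
  constructor
  · rintro ⟨n, hlow, hhigh, hdvd, hgcd⟩
    have hm : 0 < m := Nat.pos_of_ne_zero fun h => by simp [h] at hhigh; omega
    obtain ⟨k, rfl⟩ := (Nat.mul_dvd_mul_iff_left (by omega : 0 < d)).mp hdvd
    rw [← mul_assoc, Nat.mul_div_cancel_left k (by positivity)] at hgcd
    exact ⟨k, hgcd, hlow, by omega⟩
  · rintro ⟨k, hk, hlow, hhigh⟩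
    have hm : 0 < m := Nat.pos_of_ne_zero fun h => by simp [h] at hlow
    refine ⟨m * k, hlow, by omega, ⟨k, by ring⟩, ?_⟩
    rwa [← mul_assoc, Nat.mul_div_cancel_left k (by positivity)]

theorem stmt13_general (P N : ℕ) (hN : 2 * P + 1 < N) :
    (∀ d : ℕ, d ∣ N → 1 < d →
        ∃ n : ℕ, P + 1 ≤ n ∧ n ≤ N - P - 1 ∧ N ∣ d * n ∧ Nat.gcd d (d * n / N) = 1) ↔
      ((P : ℝ) + 1 ≤ Hfun N) := by
  rw [le_Hfun_iff (by omega) (by positivity)]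
  refine forall₃_congr fun d hdN hd => ?_
  obtain ⟨m, rfl⟩ := hdN
  rw [exists_admissible_iff hd, ← hfun_le_div_iff hd m (P + 1) (by omega)]
  push_cast
  rfl

/-- for 1 ≤ P and N > 2P+1, the condition "for every divisor d > 1 of N
there is an integer n with P+1 ≤ n ≤ N−P−1, N ∣ d·n and gcd(d, d·n/N) = 1" is
equivalent to H(N) ≥ P+1. -/
theorem stmt13 (P N : ℕ) (hP : 1 ≤ P) (hN : 2 * P + 1 < N) :
    (∀ d : ℕ, d ∣ N → 1 < d →
        ∃ n : ℕ, P + 1 ≤ n ∧ n ≤ N - P - 1 ∧ N ∣ d * n ∧ Nat.gcd d (d * n / N) = 1) ↔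
      ((P : ℝ) + 1 ≤ Hfun N) :=
  stmt13_general P N hN
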